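/- Fix γ > 0 and β ∈ (0,1]. For all ε > 0 and M > 0 there exists c = c(ε, M, β, γ) > 0 with the following property. Let a₁,b₁,a₂,b₂ ≥ 0 and m > 0 define a quartet metric d on {v₁,w₁,v₂,w₂} by d(v₁,w₁)=a₁+b₁, d(v₂,w₂)=a₂+b₂, d(v₁,v₂)=a₁+m+a₂, d(v₁,w₂)=a₁+m+b₂, d(w₁,v₂)=b₁+m+a₂, d(w₁,w₂)=b₁+m+b₂, and suppose d(x,y) < M for all pairs x,y. Let (σ^t)_{t=1}^k be i.i.d. random vectors in {−1,+1}^{\{v₁,w₁,v₂,w₂\}} with E[σ_x^t σ_y^t] = e^{−2 d(x,y)} for all pairs x ≠ y, and let (σ̂^t)_{t=1}^k be {−1,+1}^{\{v₁,w₁,v₂,w₂\}}-valued with the property that, conditionally on (σ^t)_{t=1}^k, the family (σ̂_x^t)_{x,t} is independent with P[σ̂_x^t = σ_x^t | ·] = (1+η_x)/2 for constants η_x ∈ [β,1]. If k ≥ c·log n for an integer n ≥ 2, then with probability at least 1 − n^{−γ}, |Int(σ̂_{v₁}, σ̂_{w₁}, σ̂_{v₂}, σ̂_{w₂}) − m|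 < ε, where Int(·) := (1/2)·( Dist(σ̂_{v₁},σ̂_{v₂}) + Dist(σ̂_{w₁},σ̂_{w₂}) − Dist(σ̂_{v₁},σ̂_{w₁}) − Dist(σ̂_{v₂},σ̂_{w₂}) ). -/

import Mathlib

open scoped Classical

/-- The ±1 spin value of a Boolean state. -/
def pmVal (b : Bool) : ℝ := if b then 1 else -1

/-- Symmetric-channel weight: a ±1 signal is reproduced with probability
`(1+η)/2` and flipped with probability `(1−η)/2`. -/
noncomputable def channel (η : ℝ) (a b : Bool) : ℝ :=
  if b = a then (1 + η) / 2 else (1 - η) / 2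

/-- The quartet tree metric on the four points `v₁ = 0`, `w₁ = 1`, `v₂ = 2`,
`w₂ = 3`, with split `v₁w₁|v₂w₂`, leg lengths `a₁,b₁,a₂,b₂` and internal path
length `m`. -/
def quartetDist (a₁ b₁ a₂ b₂ m : ℝ) : Fin 4 → Fin 4 → ℝ :=
  !![0,      a₁ + b₁,      a₁ + m + a₂, a₁ + m + b₂;
     a₁ + b₁,      0,      b₁ + m + a₂, b₁ + m + b₂;
     a₁ + m + a₂, b₁ + m + a₂,      0,  a₂ + b₂;
     a₁ + m + b₂, b₁ + m + b₂, a₂ + b₂,      0]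

/-!
Passing a ±1 signal through independent symmetric channels with correlations `η x` multiplies
each pair correlation `E[σ_x σ_y] = e^{-2 d(x,y)}` by `η x * η y`, so
`-½ log E[σ̂_x σ̂_y] = d(x,y) - ½ log η x - ½ log η y`. In the four-point combination every
`log η x` occurs once with each sign and the leg lengths cancel as well, so `Int` evaluated at the
true correlations of the reconstructed sequences is exactly `m`.

These four correlations are at least `μ₀ = β² e^{-2M}`, and on `[μ₀/2, ∞)` the logarithm is
`2/μ₀`-Lipschitz. Hence `|Int - m| < ε` as soon as every empirical correlation is within
`δ = μ₀/2 · min 1 ε` of its mean. The pairs `(σ^t, σ̂^t)` are i.i.d., so a Chernoff bound and a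
union bound over the four pairs show that this fails with probability at most
`8 e^{-kδ²/16} ≤ n^{-γ}` once `k ≥ 16 (γ + 3) δ⁻² log n`.
-/

open Finset

section IidSample

variable {E : Type*} [Fintype E]

noncomputable def iidProb (p : E → ℝ) (k : ℕ) (A : (Fin k → E) → Prop) [DecidablePred A] :
    ℝ :=
  ∑ ω : Fin k → E, (∏ t, p (ω t)) * if A ω then 1 else 0

lemma sum_prod_mul_prod_eq_pow (p g : E → ℝ) (k : ℕ) :
    ∑ ω : Fin k → E, (∏ t, p (ω t)) * ∏ t, g (ω t) = (∑ e, p e * g e) ^ k := by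
  rw [Fintype.sum_pow]
  simp only [prod_mul_distrib]

variable {p : E → ℝ}

lemma iidProb_le_add (hp : ∀ e, 0 ≤ p e) {k : ℕ} {A B C : (Fin k → E) → Prop}
    [DecidablePred A] [DecidablePred B] [DecidablePred C]
    (h : ∀ ω, C ω → A ω ∨ B ω) : iidProb p k C ≤ iidProb p k A + iidProb p k B := by
  unfold iidProb
  rw [← sum_add_distrib]
  gcongr with ω
  rw [← mul_add]
  gcongr
  · exact prod_nonneg fun t _ => hp _
  · have hω := h ω
    split_ifs <;> norm_num
    tauto

lemma sum_mul_exp_sub_mean_le (hp : ∀ e, 0 ≤ p e) (hp1 : ∑ e, p e = 1) {f : E → ℝ}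
    (hf : ∀ e, |f e| ≤ 1) {l : ℝ} (hl0 : 0 ≤ l) (hl : l ≤ 1 / 2) :
    ∑ e, p e * Real.exp (l * (f e - ∑ e', p e' * f e')) ≤ Real.exp (4 * l ^ 2) := by
  set μ := ∑ e', p e' * f e'
  have hμ : |μ| ≤ 1 := by
    calc |μ| ≤ ∑ e, p e * |f e| := by
          simpa only [abs_mul, abs_of_nonneg (hp _)] using
            abs_sum_le_sum_abs (fun e => p e * f e) univ
      _ ≤ ∑ e, p e * 1 := by gcongr with e; exact hp e; exact hf e
      _ = 1 := by simpa using hp1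
  have hdev : ∀ e, |f e - μ| ≤ 2 := fun e => (abs_sub _ _).trans (by linarith [hf e])
  -- second-order Taylor bound `exp y ≤ 1 + y + y²` for `|y| ≤ 1`
  have hquad : ∀ e, Real.exp (l * (f e - μ)) ≤ 1 + l * (f e - μ) + l ^ 2 * 4 := by
    intro e
    have hy : |l * (f e - μ)| ≤ 1 := by
      rw [abs_mul, abs_of_nonneg hl0]; nlinarith [hdev e, abs_nonneg (f e - μ)]
    have hsq : (f e - μ) ^ 2 ≤ 4 := by
      nlinarith [sq_abs (f e - μ), hdev e, abs_nonneg (f e - μ)]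
    nlinarith [(abs_le.1 (Real.abs_exp_sub_one_sub_id_le hy)).2, sq_nonneg l]
  have hcentered : ∑ e, p e * (f e - μ) = 0 := by
    simp only [mul_sub, sum_sub_distrib, ← sum_mul, hp1, one_mul, sub_self, μ]
  calc ∑ e, p e * Real.exp (l * (f e - μ))
      ≤ ∑ e, p e * (1 + l * (f e - μ) + l ^ 2 * 4) := by
        gcongr with e; exact hp e; exact hquad e
    _ = (∑ e, p e) + l * ∑ e, p e * (f e - μ) + l ^ 2 * 4 * ∑ e, p e := by
        simp only [mul_sum, ← sum_add_distrib]; congr 1; ext e; ring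
    _ = 1 + 4 * l ^ 2 := by rw [hp1, hcentered]; ring
    _ ≤ Real.exp (4 * l ^ 2) := by linarith [Real.add_one_le_exp (4 * l ^ 2)]

lemma iidProb_avg_ge_le_exp (hp : ∀ e, 0 ≤ p e) (hp1 : ∑ e, p e = 1) {f : E → ℝ}
    (hf : ∀ e, |f e| ≤ 1) {δ : ℝ} (hδ0 : 0 ≤ δ) (hδ2 : δ ≤ 2) (k : ℕ) :
    iidProb p k (fun ω => (∑ e, p e * f e) + δ ≤ (1 / (k : ℝ)) * ∑ t, f (ω t))
      ≤ Real.exp (-(k * δ ^ 2 / 16)) := by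
  set μ := ∑ e, p e * f e
  set l := δ / 8 with hl
  have hl0 : 0 ≤ l := by positivity
  have markov : ∀ ω : Fin k → E,
      (if μ + δ ≤ (1 / (k : ℝ)) * ∑ t, f (ω t) then (1 : ℝ) else 0)
        ≤ (∏ t, Real.exp (l * (f (ω t) - μ))) * Real.exp (-(l * k * δ)) := by
    intro ω
    split_ifs with h
    · have hsum : k * (μ + δ) ≤ ∑ t, f (ω t) := by
        rcases k.eq_zero_or_pos with rfl | hk
        · simp
        · rwa [one_div_mul_eq_div, le_div_iff₀' (by positivity)] at h
      rw [← Real.exp_sum, ← Real.exp_add, Real.one_le_exp_iff, ← mul_sum, sum_sub_distrib,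
        sum_const, card_univ, Fintype.card_fin, nsmul_eq_mul]
      nlinarith [mul_nonneg hl0 (sub_nonneg.2 hsum)]
    · positivity
  calc iidProb p k (fun ω => μ + δ ≤ (1 / (k : ℝ)) * ∑ t, f (ω t))
      ≤ ∑ ω : Fin k → E, (∏ t, p (ω t)) *
          ((∏ t, Real.exp (l * (f (ω t) - μ))) * Real.exp (-(l * k * δ))) := by
        unfold iidProb
        gcongr with ω
        · exact prod_nonneg fun t _ => hp _
        · exact markov ω
    _ = (∑ e, p e * Real.exp (l * (f e - μ))) ^ k * Real.exp (-(l * k * δ)) := by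
        simp only [← mul_assoc, ← sum_mul]
        rw [sum_prod_mul_prod_eq_pow p fun e => Real.exp (l * (f e - μ))]
    _ ≤ Real.exp (4 * l ^ 2) ^ k * Real.exp (-(l * k * δ)) := by
        gcongr
        · exact sum_nonneg fun e _ => mul_nonneg (hp e) (Real.exp_pos _).le
        · exact sum_mul_exp_sub_mean_le hp hp1 hf hl0 (by linarith)
    _ = Real.exp (-(k * δ ^ 2 / 16)) := by
        rw [← Real.exp_nat_mul, ← Real.exp_add, hl]
        ring_nf

lemma iidProb_abs_avg_sub_ge_le_exp (hp : ∀ e, 0 ≤ p e) (hp1 : ∑ e, p e = 1) {f : E → ℝ}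
    (hf : ∀ e, |f e| ≤ 1) {δ : ℝ} (hδ0 : 0 ≤ δ) (hδ2 : δ ≤ 2) (k : ℕ) :
    iidProb p k (fun ω => δ ≤ |(1 / (k : ℝ)) * (∑ t, f (ω t)) - ∑ e, p e * f e|)
      ≤ 2 * Real.exp (-(k * δ ^ 2 / 16)) := by
  have upper := iidProb_avg_ge_le_exp hp hp1 hf hδ0 hδ2 k
  have lower := iidProb_avg_ge_le_exp hp hp1 (f := fun e => -f e) (by simpa using hf) hδ0 hδ2 k
  refine ((iidProb_le_add hp fun ω hω => ?_).trans (add_le_add upper lower)).trans_eq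
    (two_mul _).symm
  simp only [mul_neg, sum_neg_distrib]
  rcases le_abs'.1 hω with h | h
  · right; linarith
  · left; linarith

lemma one_sub_sum_iidProb_le_iidProb (hp : ∀ e, 0 ≤ p e) (hp1 : ∑ e, p e = 1) {ι : Type*}
    (s : Finset ι) {k : ℕ} (B : ι → (Fin k → E) → Prop) [∀ i, DecidablePred (B i)]
    (A : (Fin k → E) → Prop) [DecidablePred A] (h : ∀ ω, (∀ i ∈ s, ¬ B i ω) → A ω) :
    1 - ∑ i ∈ s, iidProb p k (B i) ≤ iidProb p k A := by
  have hmass : ∑ ω : Fin k → E, ∏ t, p (ω t) = 1 := by rw [← Fintype.sum_pow, hp1, one_pow]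
  have hind : ∀ ω, 1 - ∑ i ∈ s, (if B i ω then (1 : ℝ) else 0) ≤ if A ω then 1 else 0 := by
    intro ω
    by_cases hA : A ω
    · simp only [hA, if_true]
      linarith [sum_nonneg fun i (_ : i ∈ s) => (by positivity : (0 : ℝ) ≤ if B i ω then 1 else 0)]
    · obtain ⟨i, hi, hB⟩ : ∃ i ∈ s, B i ω := by by_contra! hB; exact hA (h ω hB)
      have := single_le_sum (f := fun i => if B i ω then (1 : ℝ) else 0)
        (fun j _ => by positivity) hi
      simp only [hA, hB, if_true, if_false] at this ⊢
      linarith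
  calc 1 - ∑ i ∈ s, iidProb p k (B i)
      = ∑ ω : Fin k → E, (∏ t, p (ω t)) * (1 - ∑ i ∈ s, if B i ω then (1 : ℝ) else 0) := by
        simp only [iidProb, mul_sub, mul_one, mul_sum, sum_sub_distrib, hmass]
        rw [sum_comm]
    _ ≤ iidProb p k A := by
        unfold iidProb
        gcongr with ω
        · exact prod_nonneg fun t _ => hp _
        · exact hind ω

lemma one_sub_card_mul_exp_le_iidProb (hp : ∀ e, 0 ≤ p e) (hp1 : ∑ e, p e = 1) {ι : Type*}
    (s : Finset ι) {f : ι → E → ℝ} (hf : ∀ i e, |f i e| ≤ 1) {δ : ℝ} (hδ0 : 0 ≤ δ)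
    (hδ2 : δ ≤ 2) {k : ℕ} (A : (Fin k → E) → Prop) [DecidablePred A]
    (hA : ∀ ω, (∀ i ∈ s, |(1 / (k : ℝ)) * (∑ t, f i (ω t)) - ∑ e, p e * f i e| < δ) → A ω) :
    1 - s.card * (2 * Real.exp (-(k * δ ^ 2 / 16))) ≤ iidProb p k A := by
  refine le_trans ?_ (one_sub_sum_iidProb_le_iidProb hp hp1 s
    (fun i ω => δ ≤ |(1 / (k : ℝ)) * (∑ t, f i (ω t)) - ∑ e, p e * f i e|) A
    fun ω hω => hA ω fun i hi => not_le.1 (hω i hi))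
  have := sum_le_sum fun i (_ : i ∈ s) =>
    iidProb_abs_avg_sub_ge_le_exp hp hp1 (hf i) hδ0 hδ2 k
  rw [sum_const, nsmul_eq_mul] at this
  linarith

end IidSample

section JointLaw

variable {A B : Type*} (q : A → ℝ) (K : A → B → ℝ)

noncomputable def jointLaw (e : A × B) : ℝ := q e.1 * K e.1 e.2

lemma jointLaw_nonneg {q : A → ℝ} {K : A → B → ℝ} (hq : ∀ a, 0 ≤ q a) (hK : ∀ a b, 0 ≤ K a b)
    (e : A × B) : 0 ≤ jointLaw q K e :=
  mul_nonneg (hq _) (hK _ _)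

variable [Fintype A] [Fintype B]

lemma sum_sum_prod_mul_prod_mul_ite_eq_iidProb (k : ℕ) (G : (Fin k → B) → Prop)
    [DecidablePred G] :
    ∑ s : Fin k → A, ∑ sh : Fin k → B,
        (∏ t, q (s t)) * (∏ t, K (s t) (sh t)) * (if G sh then 1 else 0)
      = iidProb (jointLaw q K) k (fun ω => G fun t => (ω t).2) := by
  unfold iidProb jointLaw
  rw [← (Equiv.arrowProdEquivProdArrow (Fin k) (fun _ => A) (fun _ => B)).symm.sum_comp,
    Fintype.sum_prod_type]
  simp only [Equiv.arrowProdEquivProdArrow, Equiv.coe_fn_symm_mk, prod_mul_distrib]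
  rfl

lemma sum_jointLaw_mul (g : B → ℝ) :
    ∑ e, jointLaw q K e * g e.2 = ∑ a, q a * ∑ b, K a b * g b := by
  simp only [jointLaw, Fintype.sum_prod_type, mul_sum, mul_assoc]

lemma sum_jointLaw (hK : ∀ a, ∑ b, K a b = 1) :
    ∑ e, jointLaw q K e = ∑ a, q a := by
  simpa only [mul_one, hK] using sum_jointLaw_mul q K fun _ => 1

end JointLaw

section Channel

lemma abs_pmVal (b : Bool) : |pmVal b| = 1 := by
  cases b <;> simp [pmVal]

lemma channel_nonneg {η : ℝ} (h0 : -1 ≤ η) (h1 : η ≤ 1) (a b : Bool) : 0 ≤ channel η a b := by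
  unfold channel; split_ifs <;> linarith

lemma sum_channel (η : ℝ) (a : Bool) : ∑ b, channel η a b = 1 := by
  cases a <;> simp [channel] <;> ring

lemma sum_channel_mul_pmVal (η : ℝ) (a : Bool) :
    ∑ b, channel η a b * pmVal b = η * pmVal a := by
  cases a <;> simp [channel, pmVal] <;> ring

variable {ι : Type*} [Fintype ι]

noncomputable def channelKernel (η : ι → ℝ) (a b : ι → Bool) : ℝ := ∏ z, channel (η z) (a z) (b z)

lemma channelKernel_nonneg {η : ι → ℝ} (hη : ∀ z, -1 ≤ η z ∧ η z ≤ 1) (a b : ι → Bool) :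
    0 ≤ channelKernel η a b :=
  prod_nonneg fun z _ => channel_nonneg (hη z).1 (hη z).2 _ _

variable [DecidableEq ι] (η : ι → ℝ) (s : ι → Bool)

lemma sum_channelKernel_mul_prod (g : ι → Bool → ℝ) :
    ∑ sh : ι → Bool, channelKernel η s sh * ∏ z, g z (sh z)
      = ∏ z, ∑ b, channel (η z) (s z) b * g z b := by
  simp only [channelKernel, ← prod_mul_distrib, Fintype.prod_sum]

lemma sum_channelKernel : ∑ sh : ι → Bool, channelKernel η s sh = 1 := by
  simpa only [prod_const_one, mul_one, sum_channel] using
    sum_channelKernel_mul_prod η s fun _ _ => 1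

lemma sum_channelKernel_mul_pmVal_mul_pmVal {x y : ι} (hxy : x ≠ y) :
    ∑ sh : ι → Bool, channelKernel η s sh * (pmVal (sh x) * pmVal (sh y))
      = η x * η y * (pmVal (s x) * pmVal (s y)) := by
  let g : ι → Bool → ℝ := fun z b =>
    (if z = x then pmVal b else 1) * (if z = y then pmVal b else 1)
  have hg : ∀ sh : ι → Bool, ∏ z, g z (sh z) = pmVal (sh x) * pmVal (sh y) := by
    intro sh; simp only [g, prod_mul_distrib, prod_ite_eq', mem_univ, if_true]
  have hsum : ∀ z, ∑ b, channel (η z) (s z) b * g z b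
      = (if z = x then η z * pmVal (s z) else 1) * (if z = y then η z * pmVal (s z) else 1) := by
    intro z
    by_cases hx : z = x
    · subst hx; simp only [g, ↓reduceIte, if_neg hxy, mul_one, sum_channel_mul_pmVal]
    · by_cases hy : z = y
      · subst hy; simp only [g, ↓reduceIte, if_neg hx, one_mul, sum_channel_mul_pmVal]
      · simp only [g, if_neg hx, if_neg hy, mul_one, sum_channel]
  calc ∑ sh : ι → Bool, channelKernel η s sh * (pmVal (sh x) * pmVal (sh y))
      = ∑ sh : ι → Bool, channelKernel η s sh * ∏ z, g z (sh z) := by simp only [hg]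
    _ = η x * η y * (pmVal (s x) * pmVal (s y)) := by
        simp only [sum_channelKernel_mul_prod, hsum, prod_mul_distrib, prod_ite_eq', mem_univ,
          if_true]
        ring

lemma sum_jointLaw_channelKernel_mul_pmVal_mul_pmVal (q : (ι → Bool) → ℝ) {x y : ι}
    (hxy : x ≠ y) :
    ∑ e, jointLaw q (channelKernel η) e * (pmVal (e.2 x) * pmVal (e.2 y))
      = η x * η y * ∑ a, q a * (pmVal (a x) * pmVal (a y)) := by
  rw [sum_jointLaw_mul q (channelKernel η) fun b => pmVal (b x) * pmVal (b y)]
  simp only [sum_channelKernel_mul_pmVal_mul_pmVal η _ hxy, mul_left_comm _ (η x * η y),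
    ← mul_sum]

end Channel

section FourPoint

noncomputable def empCorr {ι : Type*} {k : ℕ} (sh : Fin k → ι → Bool) (x y : ι) : ℝ :=
  (1 / (k : ℝ)) * ∑ t, pmVal (sh t x) * pmVal (sh t y)

/-- `Dist` as a function of the empirical correlation `r`; for `r ≤ 0`, where `Dist = +∞`,
`Real.log` returns a junk value, so the event in the theorem also requires `0 < r`. -/
noncomputable def distEst (r : ℝ) : ℝ := -((1 / 2) * Real.log r)

noncomputable def fourPoint (r : Fin 4 → Fin 4 → ℝ) : ℝ :=
  (1 / 2) * (distEst (r 0 2) + distEst (r 1 3) - distEst (r 0 1) - distEst (r 2 3))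

def quartetPairs : Finset (Fin 4 × Fin 4) := {(0, 2), (1, 3), (0, 1), (2, 3)}

lemma fourPoint_corr_quartetDist {η : Fin 4 → ℝ} (hη : ∀ x, 0 < η x) (a₁ b₁ a₂ b₂ m : ℝ) :
    fourPoint (fun x y => η x * η y * Real.exp (-2 * quartetDist a₁ b₁ a₂ b₂ m x y)) = m := by
  have hlog : ∀ x y, Real.log (η x * η y * Real.exp (-2 * quartetDist a₁ b₁ a₂ b₂ m x y))
      = Real.log (η x) + Real.log (η y) - 2 * quartetDist a₁ b₁ a₂ b₂ m x y := by
    intro x y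
    rw [Real.log_mul (mul_pos (hη x) (hη y)).ne' (Real.exp_pos _).ne',
      Real.log_mul (hη x).ne' (hη y).ne', Real.log_exp]
    ring
  simp only [fourPoint, distEst, hlog]
  simp only [quartetDist, Matrix.of_apply, Matrix.cons_val', Matrix.cons_val,
    Matrix.cons_val_fin_one, Matrix.cons_val_zero, Matrix.cons_val_one]
  ring

lemma abs_log_sub_log_le {ν r μ : ℝ} (hν : 0 < ν) (hr : ν ≤ r) (hμ : ν ≤ μ) :
    |Real.log r - Real.log μ| ≤ |r - μ| / ν := by
  wlog hrμ : r ≤ μ generalizing r μ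
  · rw [abs_sub_comm, abs_sub_comm r]; exact this hμ hr (by linarith)
  have hr0 : 0 < r := hν.trans_le hr
  rw [abs_sub_comm (Real.log r), abs_sub_comm r,
    abs_of_nonneg (sub_nonneg.2 (Real.log_le_log hr0 hrμ)), abs_of_nonneg (sub_nonneg.2 hrμ),
    ← Real.log_div (by linarith) hr0.ne']
  calc Real.log (μ / r) ≤ μ / r - 1 := Real.log_le_sub_one_of_pos (div_pos (by linarith) hr0)
    _ = (μ - r) / r := by field_simp
    _ ≤ (μ - r) / ν := div_le_div_of_nonneg_left (by linarith) hν hr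

lemma pos_and_abs_log_sub_log_lt {μ₀ μ r ε : ℝ} (hμ₀ : 0 < μ₀) (hμ : μ₀ ≤ μ)
    (hr : |r - μ| < μ₀ / 2 * min 1 ε) : 0 < r ∧ |Real.log r - Real.log μ| < ε := by
  have hmin : min 1 ε ≤ 1 := min_le_left _ _
  have hr' : μ₀ / 2 ≤ r := by
    nlinarith [(abs_lt.1 hr).1, mul_le_mul_of_nonneg_left hmin (by positivity : 0 ≤ μ₀ / 2)]
  refine ⟨by linarith, ?_⟩
  calc |Real.log r - Real.log μ| ≤ |r - μ| / (μ₀ / 2) :=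
        abs_log_sub_log_le (by positivity) hr' (by linarith)
    _ < min 1 ε := by rw [div_lt_iff₀ (by positivity)]; linarith
    _ ≤ ε := min_le_right _ _

lemma abs_fourPoint_sub_fourPoint_le (r μ : Fin 4 → Fin 4 → ℝ) :
    |fourPoint r - fourPoint μ| ≤ (1 / 4) * (|Real.log (r 0 2) - Real.log (μ 0 2)|
      + |Real.log (r 1 3) - Real.log (μ 1 3)| + |Real.log (r 0 1) - Real.log (μ 0 1)|
      + |Real.log (r 2 3) - Real.log (μ 2 3)|) := by
  have hsplit : fourPoint r - fourPoint μ = (1 / 4) * (-(Real.log (r 0 2) - Real.log (μ 0 2))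
      - (Real.log (r 1 3) - Real.log (μ 1 3)) + (Real.log (r 0 1) - Real.log (μ 0 1))
      + (Real.log (r 2 3) - Real.log (μ 2 3))) := by
    simp only [fourPoint, distEst]; ring
  rw [hsplit, abs_mul, abs_of_pos (by norm_num : (0 : ℝ) < 1 / 4)]
  gcongr
  refine (abs_add_le _ _).trans (add_le_add ((abs_add_le _ _).trans (add_le_add
    ((abs_sub _ _).trans (add_le_add (abs_neg _).le le_rfl)) le_rfl)) le_rfl)

lemma fourPoint_close {r μ : Fin 4 → Fin 4 → ℝ} {μ₀ ε : ℝ} (hμ₀ : 0 < μ₀)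
    (hμ : ∀ i ∈ quartetPairs, μ₀ ≤ μ i.1 i.2)
    (hr : ∀ i ∈ quartetPairs, |r i.1 i.2 - μ i.1 i.2| < μ₀ / 2 * min 1 ε) :
    0 < r 0 2 ∧ 0 < r 1 3 ∧ 0 < r 0 1 ∧ 0 < r 2 3 ∧ |fourPoint r - fourPoint μ| < ε := by
  have hclose := fun i hi => pos_and_abs_log_sub_log_lt hμ₀ (hμ i hi) (hr i hi)
  simp only [quartetPairs, mem_insert, mem_singleton, forall_eq_or_imp, forall_eq] at hclose
  obtain ⟨⟨h02, l02⟩, ⟨h13, l13⟩, ⟨h01, l01⟩, ⟨h23, l23⟩⟩ := hclose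
  refine ⟨h02, h13, h01, h23, (abs_fourPoint_sub_fourPoint_le r μ).trans_lt ?_⟩
  linarith

end FourPoint

lemma sq_mul_exp_le_mul_mul_exp {β u v d M : ℝ} (hβ : 0 ≤ β) (hu : β ≤ u) (hv : β ≤ v)
    (hd : d ≤ M) : β ^ 2 * Real.exp (-(2 * M)) ≤ u * v * Real.exp (-2 * d) :=
  mul_le_mul (by nlinarith) (Real.exp_le_exp.2 (by linarith)) (by positivity)
    (by nlinarith)

lemma eight_mul_exp_neg_le_rpow_neg {n γ δ : ℝ} {k : ℕ} (hn : 2 ≤ n) (hδ : 0 < δ)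
    (hk : 16 * (γ + 3) / δ ^ 2 * Real.log n ≤ k) :
    8 * Real.exp (-(k * δ ^ 2 / 16)) ≤ n ^ (-γ) := by
  have hcube : Real.exp (3 * Real.log n) = n ^ 3 := by
    rw [show (3 : ℝ) * Real.log n = Real.log (n ^ 3) by rw [Real.log_pow]; norm_num,
      Real.exp_log (by positivity)]
  rw [div_mul_eq_mul_div, div_le_iff₀ (by positivity)] at hk
  rw [Real.rpow_def_of_pos (by positivity)]
  calc 8 * Real.exp (-(k * δ ^ 2 / 16))
      ≤ Real.exp (3 * Real.log n) * Real.exp (-(k * δ ^ 2 / 16)) := by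
        rw [hcube]; gcongr; nlinarith [pow_le_pow_left₀ (by norm_num) hn 3]
    _ = Real.exp (3 * Real.log n - k * δ ^ 2 / 16) := by rw [← Real.exp_add, sub_eq_add_neg]
    _ ≤ Real.exp (Real.log n * -γ) := Real.exp_le_exp.2 (by linarith)

/-- **Accuracy of the four-point internal-length estimator on reconstructed
(biased) sequences.** Fix `γ > 0` and `β ∈ (0,1]`. For all `ε, M > 0` there is
`c = c(ε,M,β,γ) > 0` with the following property. Let `d = quartetDist` be a
quartet metric with split `v₁w₁|v₂w₂` and internal path length `m > 0`, all of
whose pairwise distances are `< M`. Let `(σ^t)_{t<k}` be i.i.d. `{±1}`-vectors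
on the four points with one-sample law `q` whose pairwise correlations are
`E[σ_x σ_y] = e^{−2 d(x,y)}`, and let `(σ̂^t)` be obtained from `(σ^t)` by
passing each coordinate independently through a symmetric channel with
correlation `η_x ∈ [β,1]` (the displayed probability is the resulting joint
law). If `k ≥ c·log n` (`n ≥ 2`), then with probability at least `1 − n^{−γ}`
all four distance estimates `Dist` entering the four-point combination `Int`
are finite (positive empirical correlations) and `|Int − m| < ε`. -/
theorem quartet_internal_length_estimator_accuracy
    (γ β : ℝ) (hγ : 0 < γ) (hβ0 : 0 < β) (hβ1 : β ≤ 1) :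
    ∀ ε > (0 : ℝ), ∀ M > (0 : ℝ), ∃ c > (0 : ℝ),
      ∀ a₁ b₁ a₂ b₂ m : ℝ,
        0 ≤ a₁ → 0 ≤ b₁ → 0 ≤ a₂ → 0 ≤ b₂ → 0 < m →
        (∀ x y : Fin 4, quartetDist a₁ b₁ a₂ b₂ m x y < M) →
        ∀ (n k : ℕ), 2 ≤ n → c * Real.log n ≤ k →
        ∀ (q : (Fin 4 → Bool) → ℝ) (η : Fin 4 → ℝ),
          (∀ a, 0 ≤ q a) → (∑ a : Fin 4 → Bool, q a) = 1 →
          (∀ x y : Fin 4, x ≠ y →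
            (∑ a : Fin 4 → Bool, q a * (pmVal (a x) * pmVal (a y)))
              = Real.exp (-2 * quartetDist a₁ b₁ a₂ b₂ m x y)) →
          (∀ x, β ≤ η x ∧ η x ≤ 1) →
          (1 : ℝ) - (n : ℝ) ^ (-γ) ≤
            ∑ s : Fin k → (Fin 4 → Bool), ∑ sh : Fin k → (Fin 4 → Bool),
              (∏ t, q (s t)) * (∏ t, ∏ x : Fin 4, channel (η x) (s t x) (sh t x)) *
                (if (0 < (1 / (k : ℝ)) * ∑ t, pmVal (sh t 0) * pmVal (sh t 2) ∧
                     0 < (1 / (k : ℝ)) * ∑ t, pmVal (sh t 1) * pmVal (sh t 3) ∧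
                     0 < (1 / (k : ℝ)) * ∑ t, pmVal (sh t 0) * pmVal (sh t 1) ∧
                     0 < (1 / (k : ℝ)) * ∑ t, pmVal (sh t 2) * pmVal (sh t 3) ∧
                     |(1 / 2) *
                        ((-((1 / 2) * Real.log ((1 / (k : ℝ)) * ∑ t, pmVal (sh t 0) * pmVal (sh t 2))))
                          + (-((1 / 2) * Real.log ((1 / (k : ℝ)) * ∑ t, pmVal (sh t 1) * pmVal (sh t 3))))
                          - (-((1 / 2) * Real.log ((1 / (k : ℝ)) * ∑ t, pmVal (sh t 0) * pmVal (sh t 1))))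
                          - (-((1 / 2) * Real.log ((1 / (k : ℝ)) * ∑ t, pmVal (sh t 2) * pmVal (sh t 3)))))
                        - m| < ε)
                 then 1 else 0) := by
  intro ε hε M hM
  set μ₀ := β ^ 2 * Real.exp (-(2 * M))
  set δ := μ₀ / 2 * min 1 ε
  have hμ₀ : 0 < μ₀ := by positivity
  have hδ : 0 < δ := mul_pos (by positivity) (lt_min one_pos hε)
  have hδ2 : δ ≤ 2 := by
    have : μ₀ ≤ 1 := mul_le_one₀ (pow_le_one₀ hβ0.le hβ1) (by positivity)
      (Real.exp_le_one_iff.2 (by linarith))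
    have : δ ≤ μ₀ / 2 := mul_le_of_le_one_right (by positivity) (min_le_left _ _)
    linarith
  refine ⟨16 * (γ + 3) / δ ^ 2, by positivity, ?_⟩
  intro a₁ b₁ a₂ b₂ m _ _ _ _ _ hdM n k hn hk q η hq hq1 hcorr hη
  set corr := fun x y => η x * η y * Real.exp (-2 * quartetDist a₁ b₁ a₂ b₂ m x y)
  have hmean : ∀ i ∈ quartetPairs, ∑ e, jointLaw q (channelKernel η) e *
      (pmVal (e.2 i.1) * pmVal (e.2 i.2)) = corr i.1 i.2 := by
    intro i hi
    have hne : i.1 ≠ i.2 := by revert i; decide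
    rw [sum_jointLaw_channelKernel_mul_pmVal_mul_pmVal η q hne, hcorr _ _ hne]
  refine le_of_le_of_eq ?_
    (sum_sum_prod_mul_prod_mul_ite_eq_iidProb q (channelKernel η) k _).symm
  refine le_trans ?_ (one_sub_card_mul_exp_le_iidProb
    (jointLaw_nonneg hq (channelKernel_nonneg fun z => ⟨by linarith [(hη z).1], (hη z).2⟩))
    ((sum_jointLaw q _ (sum_channelKernel η)).trans hq1) quartetPairs
    (f := fun i e => pmVal (e.2 i.1) * pmVal (e.2 i.2))
    (fun i e => by rw [abs_mul, abs_pmVal, abs_pmVal, one_mul]) hδ.le hδ2 _ fun ω hω => ?_)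
  · have := eight_mul_exp_neg_le_rpow_neg (by exact_mod_cast hn) hδ hk
    rw [show quartetPairs.card = 4 from rfl]
    push_cast
    linarith
  · have hm : fourPoint corr = m :=
      fourPoint_corr_quartetDist (fun x => hβ0.trans_le (hη x).1) a₁ b₁ a₂ b₂ m
    have h := fourPoint_close (r := empCorr fun t => (ω t).2) (μ := corr) (ε := ε) hμ₀
      (fun i _ => sq_mul_exp_le_mul_mul_exp hβ0.le (hη i.1).1 (hη i.2).1 (hdM i.1 i.2).le)
      fun i hi => by have := hω i hi; rwa [hmean i hi] at this
    rwa [hm] at h
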